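/- The determinant of a uniformly random correlation matrix converges to 0 (its lower bound) as the dimension grows: D_d converges in probability to 0 as d → ∞; i.e., for every ε > 0, P(D_d > ε) → 0 as d → ∞. -/

import Mathlib

open MeasureTheory ProbabilityTheory Real Filter Finset

/-- The Beta(a,b) distribution on ℝ: density x^(a-1)(1-x)^(b-1)/B(a,b) on (0,1),
where B(a,b) = Γ(a)Γ(b)/Γ(a+b). -/
noncomputable def betaMeasureDensity (a b : ℝ) : Measure ℝ :=
  volume.withDensity fun x =>
    ENNReal.ofReal (if x ∈ Set.Ioo (0 : ℝ) 1 then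
      x ^ (a - 1) * (1 - x) ^ (b - 1) / (Real.Gamma a * Real.Gamma b / Real.Gamma (a + b))
    else 0)

/-- `X` has the Beta(a,b) distribution under `P`. -/
def HasBetaDist {Ω : Type*} [MeasurableSpace Ω] (P : Measure Ω) (X : Ω → ℝ) (a b : ℝ) : Prop :=
  Measurable X ∧ Measure.map X P = betaMeasureDensity a b

/-!
The first factor `X_{d,1}` has law Beta(1, (d-1)/2), with density `b (1-x)^(b-1)` for
`b = (d-1)/2`, so `P(X_{d,1} > ε) ≤ b (1-ε)^b`, which tends to `0` as `b → ∞`. Since every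
factor lies in `(0,1)` almost surely, `D_d ≤ X_{d,1}` almost surely, and the claim follows.
-/

lemma betaMeasureDensity_compl_Ioo (a b : ℝ) : betaMeasureDensity a b (Set.Ioo 0 1)ᶜ = 0 := by
  rw [betaMeasureDensity, withDensity_apply _ measurableSet_Ioo.compl]
  exact (setLIntegral_congr_fun measurableSet_Ioo.compl fun x hx => by
    rw [if_neg hx, ENNReal.ofReal_zero]).trans lintegral_zero

lemma betaMeasureDensity_one_Ioi_le {b ε : ℝ} (hb : 1 ≤ b) (hε : ε < 1) :
    betaMeasureDensity 1 b (Set.Ioi ε) ≤ ENNReal.ofReal (b * (1 - ε) ^ b) := by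
  have hb0 : 0 < b := zero_lt_one.trans_le hb
  have hB : Real.Gamma 1 * Real.Gamma b / Real.Gamma (1 + b) = b⁻¹ := by
    have := (Real.Gamma_pos_of_pos hb0).ne'
    rw [Real.Gamma_one, one_mul, add_comm, Real.Gamma_add_one hb0.ne']
    field_simp
  have hdensity : ∀ x ∈ Set.Ioi ε,
      ENNReal.ofReal (if x ∈ Set.Ioo (0 : ℝ) 1 then
        x ^ ((1 : ℝ) - 1) * (1 - x) ^ (b - 1) / (Real.Gamma 1 * Real.Gamma b / Real.Gamma (1 + b))
      else 0) ≤ (Set.Ioo ε 1).indicator (fun _ => ENNReal.ofReal (b * (1 - ε) ^ (b - 1))) x := by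
    intro x hx
    by_cases hmem : x ∈ Set.Ioo (0 : ℝ) 1
    · rw [if_pos hmem, Set.indicator_of_mem (Set.mem_Ioo.2 ⟨hx, hmem.2⟩), hB, sub_self,
        rpow_zero, one_mul, div_inv_eq_mul, mul_comm]
      gcongr
      · linarith [hmem.2]
      · exact le_of_lt hx
    · simp [hmem]
  calc betaMeasureDensity 1 b (Set.Ioi ε)
      ≤ ∫⁻ x in Set.Ioi ε,
          (Set.Ioo ε 1).indicator (fun _ => ENNReal.ofReal (b * (1 - ε) ^ (b - 1))) x := by
        rw [betaMeasureDensity, withDensity_apply _ measurableSet_Ioi]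
        exact setLIntegral_mono (measurable_const.indicator measurableSet_Ioo) hdensity
    _ = ENNReal.ofReal (b * (1 - ε) ^ (b - 1)) * ENNReal.ofReal (1 - ε) := by
        rw [lintegral_indicator measurableSet_Ioo, setLIntegral_const,
          Measure.restrict_apply measurableSet_Ioo,
          Set.inter_eq_left.2 Set.Ioo_subset_Ioi_self, Real.volume_Ioo]
    _ = ENNReal.ofReal (b * (1 - ε) ^ b) := by
        rw [← ENNReal.ofReal_mul (by positivity), mul_assoc,
          ← rpow_add_one (by linarith) (b - 1), sub_add_cancel]

section HasBetaDist

variable {Ω : Type*} [MeasurableSpace Ω] {P : Measure Ω} {X : Ω → ℝ}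

lemma HasBetaDist.ae_mem_Ioo {a b : ℝ} (h : HasBetaDist P X a b) :
    ∀ᵐ ω ∂P, X ω ∈ Set.Ioo 0 1 :=
  ae_of_ae_map h.1.aemeasurable <| ae_iff.2 <| by
    rw [h.2]
    exact betaMeasureDensity_compl_Ioo a b

lemma HasBetaDist.measure_lt_le {b ε : ℝ} (h : HasBetaDist P X 1 b) (hb : 1 ≤ b) (hε : ε < 1) :
    P {ω | ε < X ω} ≤ ENNReal.ofReal (b * (1 - ε) ^ b) := by
  change P (X ⁻¹' Set.Ioi ε) ≤ _
  rw [← Measure.map_apply h.1 measurableSet_Ioi, h.2]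
  exact betaMeasureDensity_one_Ioi_le hb hε

end HasBetaDist

lemma ae_prod_le_of_mem {Ω ι : Type*} [MeasurableSpace Ω] {P : Measure Ω} {s : Finset ι} {i : ι}
    (hi : i ∈ s) {Y : ι → Ω → ℝ} (hY : ∀ j ∈ s, ∀ᵐ ω ∂P, Y j ω ∈ Set.Icc 0 1) :
    ∀ᵐ ω ∂P, ∏ j ∈ s, Y j ω ≤ Y i ω := by
  filter_upwards [(eventually_all_finset s).2 hY] with ω hω
  simpa using prod_le_prod_of_subset_of_le_one (singleton_subset_iff.2 hi)
    (fun j hj => (hω j hj).1) (fun j hj _ => (hω j hj).2)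

lemma tendsto_mul_rpow_atTop_nhds_zero {r : ℝ} (hr0 : 0 < r) (hr1 : r < 1) :
    Tendsto (fun x : ℝ => x * r ^ x) atTop (nhds 0) :=
  (tendsto_rpow_mul_exp_neg_mul_atTop_nhds_zero 1 _ (neg_pos.2 (log_neg hr0 hr1))).congr
    fun x => by rw [rpow_one, rpow_def_of_pos hr0, neg_neg]

theorem stmt17_general
    {Ω : Type*} [MeasurableSpace Ω] (P : Measure Ω)
    (X : ℕ → ℕ → Ω → ℝ)
    (hX : ∀ d j : ℕ, 2 ≤ d → 1 ≤ j → j ≤ d - 1 →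
      HasBetaDist P (X d j) (((j : ℝ) + 1) / 2) (((d : ℝ) - (j : ℝ)) / 2)) :
    ∀ ε : ℝ, 0 < ε →
      Tendsto (fun d : ℕ => P {ω | ε < (∏ j ∈ Finset.Icc 1 (d - 1), X d j ω)}) atTop (nhds 0) := by
  intro ε hε
  set ε' := min ε (1 / 2)
  have hε'0 : 0 < ε' := lt_min hε one_half_pos
  have hε'1 : ε' < 1 := (min_le_right _ _).trans_lt one_half_lt_one
  have hbound : ∀ d ≥ 3, P {ω | ε < ∏ j ∈ Finset.Icc 1 (d - 1), X d j ω} ≤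
      ENNReal.ofReal (((d : ℝ) - 1) / 2 * (1 - ε') ^ (((d : ℝ) - 1) / 2)) := by
    intro d hd
    have hX1 : HasBetaDist P (X d 1) 1 (((d : ℝ) - 1) / 2) := by
      simpa using hX d 1 (by omega) le_rfl (by omega)
    have hprod : ∀ᵐ ω ∂P, ∏ j ∈ Finset.Icc 1 (d - 1), X d j ω ≤ X d 1 ω :=
      ae_prod_le_of_mem (Finset.mem_Icc.2 ⟨le_rfl, by omega⟩) fun j hj => by
        rw [Finset.mem_Icc] at hj
        exact (hX d j (by omega) hj.1 hj.2).ae_mem_Ioo.mono fun _ => Set.mem_Icc_of_Ioo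
    calc P {ω | ε < ∏ j ∈ Finset.Icc 1 (d - 1), X d j ω}
        ≤ P {ω | ε' < X d 1 ω} :=
          measure_mono_ae <| hprod.mono fun ω hle hlt =>
            (min_le_left _ _).trans_lt (lt_of_lt_of_le hlt hle)
      _ ≤ _ := hX1.measure_lt_le (by rify at hd; linarith) hε'1
  have hlim : Tendsto (fun d : ℕ =>
      ENNReal.ofReal (((d : ℝ) - 1) / 2 * (1 - ε') ^ (((d : ℝ) - 1) / 2))) atTop (nhds 0) := by
    have hhalf : Tendsto (fun d : ℕ => ((d : ℝ) - 1) / 2) atTop atTop :=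
      (tendsto_atTop_add_const_right _ _ tendsto_natCast_atTop_atTop).atTop_div_const two_pos
    simpa using ENNReal.tendsto_ofReal
      ((tendsto_mul_rpow_atTop_nhds_zero (by linarith) (by linarith)).comp hhalf)
  exact tendsto_of_tendsto_of_tendsto_of_le_of_le' tendsto_const_nhds hlim
    (Eventually.of_forall fun _ => zero_le) ((eventually_ge_atTop 3).mono hbound)

theorem stmt17
    {Ω : Type*} [MeasurableSpace Ω] (P : Measure Ω) [IsProbabilityMeasure P]
    (X : ℕ → ℕ → Ω → ℝ)
    (hindep : ∀ d : ℕ, 2 ≤ d →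
      iIndepFun
        (fun j : {j : ℕ // 1 ≤ j ∧ j ≤ d - 1} => X d j) P)
    (hX : ∀ d j : ℕ, 2 ≤ d → 1 ≤ j → j ≤ d - 1 →
      HasBetaDist P (X d j) (((j : ℝ) + 1) / 2) (((d : ℝ) - (j : ℝ)) / 2)) :
    ∀ ε : ℝ, 0 < ε →
      Tendsto (fun d : ℕ => P {ω | ε < (∏ j ∈ Finset.Icc 1 (d - 1), X d j ω)}) atTop (nhds 0) :=
  stmt17_general P X hX
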